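/- Let n ≥ m ≥ 0 be integers, τ > 0, s_0 ∈ ℝ, and let a_0,…,a_{n-1} be fixed real numbers. For real numbers b_0,…,b_m, define Δ(s) = s^n + Σ_{k=0}^{n-1} a_k s^k + e^{-sτ} Σ_{k=0}^{m} b_k s^k. Then there exists a unique tuple (b_0,…,b_m) ∈ ℝ^{m+1} such that Δ^{(j)}(s_0) = 0 for all j = 0, 1, …, m. -/

import Mathlib

/-!
Write `Δ(s) = P(s) + e^{-τ s} Q_b(s)` with `Q_b = ∑ b_k X^k`. Since
`(e^{c s} q(s))' = e^{c s} (q' + c q)(s)`, the `j`-th derivative of `Δ` at `s₀` is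
`P^{(j)}(s₀) + e^{-τ s₀} ((D - τ)^j Q_b)(s₀)`, so the conditions are a square linear system in `b`.
Its matrix is injective: if `((D - τ)^j Q)(s₀) = 0` for `j ≤ m`, then writing `D = (D - τ) + τ`
shows `Q^{(i)}(s₀) = 0` for `i ≤ m`, i.e. `s₀` is a root of multiplicity `> m ≥ deg Q`, so `Q = 0`.
-/

open Polynomial

namespace Polynomial

section CommSemiring

variable {R : Type*} [CommSemiring R]

/-- `d/ds` conjugated by multiplication with `exp (c s)`. -/
noncomputable def twistedDerivative (c : R) : R[X] →ₗ[R] R[X] :=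
  derivative + c • LinearMap.id

theorem twistedDerivative_apply (c : R) (q : R[X]) :
    twistedDerivative c q = derivative q + C c * q := by
  simp [twistedDerivative, smul_eq_C_mul]

theorem map_twistedDerivative {S : Type*} [CommSemiring S] (f : R →+* S) (c : R) (q : R[X]) :
    (twistedDerivative c q).map f = twistedDerivative (f c) (q.map f) := by
  simp [twistedDerivative_apply, derivative_map]

theorem map_iterate_twistedDerivative {S : Type*} [CommSemiring S] (f : R →+* S) (c : R)
    (j : ℕ) (q : R[X]) :
    ((twistedDerivative c)^[j] q).map f = (twistedDerivative (f c))^[j] (q.map f) :=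
  Function.Semiconj.iterate_right (map_twistedDerivative f c) j q

end CommSemiring

theorem eq_zero_of_natDegree_le_of_isRoot_iterate_derivative {R : Type*} [CommRing R] [IsDomain R]
    [CharZero R] {q : R[X]} {x : R} {m : ℕ} (hq : q.natDegree ≤ m)
    (hroot : ∀ i ≤ m, (derivative^[i] q).IsRoot x) : q = 0 := by
  by_contra hq0
  have hlt := lt_rootMultiplicity_of_isRoot_iterate_derivative hq0 hroot
  have hle : rootMultiplicity x q ≤ q.natDegree := by
    classical
    exact (count_roots q).symm.le.trans ((Multiset.count_le_card _ _).trans (card_roots' q))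
  omega

theorem eval_iterate_derivative_iterate_twistedDerivative_eq_zero {R : Type*} [CommRing R]
    {c x : R} {q : R[X]} {m : ℕ} (h : ∀ j ≤ m, ((twistedDerivative c)^[j] q).eval x = 0)
    {i j : ℕ} (hij : i + j ≤ m) : (derivative^[i] ((twistedDerivative c)^[j] q)).eval x = 0 := by
  induction i generalizing j with
  | zero => exact h j (by omega)
  | succ i ih =>
    have hD : derivative ((twistedDerivative c)^[j] q) =
        (twistedDerivative c)^[j + 1] q - C c * (twistedDerivative c)^[j] q := by
      rw [Function.iterate_succ_apply', twistedDerivative_apply, add_sub_cancel_right]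
    rw [Function.iterate_succ_apply, hD, iterate_derivative_sub, iterate_derivative_C_mul,
      eval_sub, eval_mul, ih (by omega), ih (by omega), mul_zero, sub_zero]

theorem eq_zero_of_natDegree_le_of_eval_iterate_twistedDerivative_eq_zero {R : Type*}
    [CommRing R] [IsDomain R] [CharZero R] {c x : R} {q : R[X]} {m : ℕ} (hq : q.natDegree ≤ m)
    (h : ∀ j ≤ m, ((twistedDerivative c)^[j] q).eval x = 0) : q = 0 :=
  eq_zero_of_natDegree_le_of_isRoot_iterate_derivative hq fun i hi =>
    eval_iterate_derivative_iterate_twistedDerivative_eq_zero h (j := 0) (by omega)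

theorem hasDerivAt_eval_add_cexp_mul_eval (p q : ℂ[X]) (c s : ℂ) :
    HasDerivAt (fun s => p.eval s + Complex.exp (c * s) * q.eval s)
      ((derivative p).eval s + Complex.exp (c * s) * (twistedDerivative c q).eval s) s := by
  have hexp : HasDerivAt (fun s => Complex.exp (c * s)) (Complex.exp (c * s) * c) s := by
    simpa using ((hasDerivAt_id s).const_mul c).cexp
  refine ((p.hasDerivAt s).add (hexp.mul (q.hasDerivAt s))).congr_deriv ?_
  rw [twistedDerivative_apply, eval_add, eval_mul, eval_C]
  ring

theorem iteratedDeriv_eval_add_cexp_mul_eval (p q : ℂ[X]) (c : ℂ) (j : ℕ) :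
    iteratedDeriv j (fun s => p.eval s + Complex.exp (c * s) * q.eval s) =
      fun s => (derivative^[j] p).eval s +
        Complex.exp (c * s) * ((twistedDerivative c)^[j] q).eval s := by
  induction j generalizing p q with
  | zero => rfl
  | succ j ih =>
    have hderiv : deriv (fun s => p.eval s + Complex.exp (c * s) * q.eval s) =
        fun s => (derivative p).eval s +
          Complex.exp (c * s) * (twistedDerivative c q).eval s :=
      _root_.funext fun s => (hasDerivAt_eval_add_cexp_mul_eval p q c s).deriv
    rw [iteratedDeriv_succ', hderiv, ih]
    rfl

theorem iteratedDeriv_eval_map_add_cexp_mul_eval_map (p q : ℝ[X]) (c x : ℝ) (j : ℕ) :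
    iteratedDeriv j (fun s => (p.map Complex.ofRealHom).eval s +
        Complex.exp (c * s) * (q.map Complex.ofRealHom).eval s) x =
      (((derivative^[j] p).eval x +
        Real.exp (c * x) * ((twistedDerivative c)^[j] q).eval x : ℝ) : ℂ) := by
  rw [iteratedDeriv_eval_add_cexp_mul_eval, iterate_derivative_map]
  simp only [← Complex.ofRealHom_eq_coe, ← map_iterate_twistedDerivative, eval_map, eval₂_at_apply]
  push_cast [Complex.ofRealHom_eq_coe]
  rfl

section Jet

variable {R : Type*} [CommRing R] [DecidableEq R]

noncomputable def twistedJet (c x : R) (m : ℕ) : (Fin (m + 1) → R) →ₗ[R] Fin (m + 1) → R :=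
  LinearMap.pi (fun j : Fin (m + 1) => leval x ∘ₗ twistedDerivative c ^ (j : ℕ)) ∘ₗ ofFn (m + 1)

theorem twistedJet_apply (c x : R) (m : ℕ) (b : Fin (m + 1) → R) (j : Fin (m + 1)) :
    twistedJet c x m b j = ((twistedDerivative c)^[j] (ofFn (m + 1) b)).eval x := by
  simp only [twistedJet, LinearMap.comp_apply, LinearMap.pi_apply, leval_apply,
    Module.End.pow_apply]

theorem twistedJet_injective [IsDomain R] [CharZero R] (c x : R) (m : ℕ) :
    Function.Injective (twistedJet c x m) := by
  refine (injective_iff_map_eq_zero _).2 fun b hb => injective_ofFn (m + 1) ?_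
  rw [map_zero]
  refine eq_zero_of_natDegree_le_of_eval_iterate_twistedDerivative_eq_zero (c := c) (x := x)
    (Nat.lt_succ_iff.1 (ofFn_natDegree_lt (Nat.le_add_left 1 m) b)) fun j hj => ?_
  simpa [twistedJet_apply] using congrFun hb ⟨j, Nat.lt_succ_of_le hj⟩

theorem twistedJet_bijective {K : Type*} [Field K] [CharZero K] [DecidableEq K] (c x : K) (m : ℕ) :
    Function.Bijective (twistedJet c x m) :=
  ⟨twistedJet_injective c x m, LinearMap.injective_iff_surjective.1 (twistedJet_injective c x m)⟩

end Jet

end Polynomial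

theorem existsUnique_b_root_multiplicity_succ_m_general
    (n m : ℕ) (τ : ℝ) (s₀ : ℝ) (a : ℕ → ℝ) :
    ∃! b : Fin (m + 1) → ℝ, ∀ j ≤ m,
      iteratedDeriv j
        (fun s : ℂ => s ^ n + (∑ k ∈ Finset.range n, (a k : ℂ) * s ^ k)
          + Complex.exp (-s * (τ : ℂ)) * ∑ k : Fin (m + 1), (b k : ℂ) * s ^ (k : ℕ))
        (s₀ : ℂ) = 0 := by
  set P : ℝ[X] := X ^ n + ∑ k ∈ Finset.range n, C (a k) * X ^ k
  refine (existsUnique_congr fun b => ?_).2 ((twistedJet_bijective (-τ) s₀ m).existsUnique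
    fun j => -(derivative^[j] P).eval s₀ / Real.exp (-τ * s₀))
  have hΔ : (fun s : ℂ => s ^ n + (∑ k ∈ Finset.range n, (a k : ℂ) * s ^ k)
        + Complex.exp (-s * (τ : ℂ)) * ∑ k : Fin (m + 1), (b k : ℂ) * s ^ (k : ℕ)) =
      fun s => (P.map Complex.ofRealHom).eval s +
        Complex.exp ((-τ : ℝ) * s) * ((ofFn (m + 1) b).map Complex.ofRealHom).eval s := by
    ext s
    simp [P, ofFn_eq_sum_monomial, Polynomial.map_sum, eval_finsetSum, mul_comm (τ : ℂ) s]
  simp only [hΔ, iteratedDeriv_eval_map_add_cexp_mul_eval_map, Complex.ofReal_eq_zero,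
    funext_iff, Fin.forall_iff, Nat.lt_succ_iff, twistedJet_apply,
    eq_div_iff (Real.exp_ne_zero _)]
  exact forall₂_congr fun j _ => by rw [eq_neg_iff_add_eq_zero, add_comm, mul_comm]

/-- Given `n ≥ m ≥ 0`, a delay `τ > 0`, a real point `s₀` and fixed real
coefficients `a_0, …, a_{n-1}`, there is a unique tuple `(b_0, …, b_m)` of real
coefficients such that the quasipolynomial
`Δ(s) = s^n + ∑_{k=0}^{n-1} a_k s^k + e^{-sτ} ∑_{k=0}^{m} b_k s^k`
satisfies `Δ^{(j)}(s₀) = 0` for all `j = 0, 1, …, m`. -/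
theorem existsUnique_b_root_multiplicity_succ_m
    (n m : ℕ) (hnm : m ≤ n) (τ : ℝ) (hτ : 0 < τ) (s₀ : ℝ) (a : ℕ → ℝ) :
    ∃! b : Fin (m + 1) → ℝ, ∀ j ≤ m,
      iteratedDeriv j
        (fun s : ℂ => s ^ n + (∑ k ∈ Finset.range n, (a k : ℂ) * s ^ k)
          + Complex.exp (-s * (τ : ℂ)) * ∑ k : Fin (m + 1), (b k : ℂ) * s ^ (k : ℕ))
        (s₀ : ℂ) = 0 :=
  existsUnique_b_root_multiplicity_succ_m_general n m τ s₀ a
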